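/- Let k be a field of characteristic zero, X a set, and A a subalgebra of the k-algebra of all functions X → k. For a ∈ A, one has da = 0 in Ω¹_{A|k} if and only if a takes only finitely many values on X. -/

import Mathlib

/-!
If `a` takes finitely many values it is a root of the separable polynomial `∏ (X - c)`, so
`P'(a)` is a unit and `P'(a) • da = d(P(a)) = 0` forces `da = 0`.

Conversely, if the range of `a` is infinite, choose an ultrafilter `U` on `X` containing the
preimages of all cofinite subsets of `k`. In the ultrapower field `k^X/U` the class of `a` is
transcendental over `k`, since a nonzero polynomial has finitely many roots. In characteristic
zero the differential of a transcendental element never vanishes: extend it to a transcendence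
basis `B`; then `k[B] → K` is formally étale, so `Ω[K⁄k] = K ⊗ Ω[k[B]⁄k]`, and `∂/∂t` on `k[B]`
detects `dt`. Pushing `da = 0` along `A → k^X/U` gives the contradiction.
-/

open Polynomial Filter KaehlerDifferential

theorem Derivation.map_eq_zero_of_separable_of_aeval_eq_zero {R A M : Type*} [CommSemiring R]
    [CommRing A] [Algebra R A] [AddCommMonoid M] [Module A M] [Module R M] [IsScalarTower R A M]
    (D : Derivation R A M) {P : R[X]} (hP : P.Separable) {a : A} (ha : aeval a P = 0) :
    D a = 0 := by
  obtain ⟨u, v, huv⟩ := hP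
  have hunit : aeval a v * aeval a (derivative P) = 1 := by
    simpa [ha] using congrArg (aeval a) huv
  calc D a = (aeval a v * aeval a (derivative P)) • D a := by rw [hunit, one_smul]
    _ = aeval a v • D (aeval a P) := by rw [mul_smul, D.map_aeval]
    _ = 0 := by rw [ha, D.map_zero, smul_zero]

theorem exists_separable_aeval_eq_zero_of_finite_range {α k : Type*} [Field k] {f : α → k}
    (hf : (Set.range f).Finite) : ∃ P : k[X], P.Separable ∧ aeval f P = 0 := by
  refine ⟨∏ c ∈ hf.toFinset, (X - C c), separable_prod_X_sub_C_iff'.mpr (Set.injOn_id _), ?_⟩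
  funext x
  rw [aeval_pi_apply₂, Pi.zero_apply, map_prod]
  exact Finset.prod_eq_zero (hf.mem_toFinset.mpr ⟨x, rfl⟩) (by simp)

theorem KaehlerDifferential.D_eq_zero_of_finite_range {k X : Type*} [Field k]
    (A : Subalgebra k (X → k)) {a : A} (ha : (Set.range (a : X → k)).Finite) : D k A a = 0 := by
  obtain ⟨P, hP, hPa⟩ := exists_separable_aeval_eq_zero_of_finite_range ha
  exact (D k A).map_eq_zero_of_separable_of_aeval_eq_zero hP
    (Subtype.val_injective (by rwa [aeval_subalgebra_coe]))

namespace Filter.Germ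

variable {α R β : Type*} [CommSemiring R] [Semiring β] [Algebra R β] {l : Filter α}

instance instAlgebra : Algebra R (l.Germ β) where
  algebraMap := (coeRingHom l).comp (algebraMap R (α → β))
  commutes' c x := x.inductionOn fun f => congrArg ((↑) : (α → β) → l.Germ β) (Algebra.commutes c f)
  smul_def' c x := x.inductionOn fun f => congrArg ((↑) : (α → β) → l.Germ β) (Algebra.smul_def c f)

variable (R l) in
def coeAlgHom : (α → β) →ₐ[R] l.Germ β :=
  { coeRingHom l with commutes' := fun _ => rfl }

@[simp] theorem coeAlgHom_apply (f : α → β) : coeAlgHom R l f = f := rfl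

theorem transcendental_coe_of_le_comap_cofinite {k : Type*} [CommRing k] [IsDomain k]
    {U : Ultrafilter α} {f : α → k} (hU : ↑U ≤ comap f cofinite) :
    Transcendental k (f : (U : Filter α).Germ k) := by
  rintro ⟨p, hp0, hpf⟩
  have hroots : ∀ᶠ x in (U : Filter α), ¬ p.IsRoot (f x) :=
    hU (preimage_mem_comap (finite_setOfPred_isRoot hp0).compl_mem_cofinite)
  have hzero : ∀ᶠ x in (U : Filter α), p.IsRoot (f x) := by
    rw [← coeAlgHom_apply (R := k), aeval_algHom_apply, coeAlgHom_apply, ← coe_zero,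
      coe_eq] at hpf
    filter_upwards [hpf] with x hx
    rwa [aeval_pi_apply₂] at hx
  exact (hroots.and hzero).exists.elim fun _ hx => hx.1 hx.2

end Filter.Germ

theorem Filter.comap_cofinite_neBot_iff {α β : Type*} {f : α → β} :
    (comap f cofinite).NeBot ↔ (Set.range f).Infinite := by
  rw [comap_neBot_iff_frequently, frequently_cofinite_mem_iff_infinite]

theorem KaehlerDifferential.D_algebraMap_ne_zero_of_formallyEtale {R S T : Type*} [CommRing R]
    [CommRing S] [CommRing T] [Algebra R S] [Algebra R T] [Algebra S T] [IsScalarTower R S T]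
    [Algebra.FormallyEtale S T] (d : Derivation R S S) {s : S} (hs : algebraMap S T (d s) ≠ 0) :
    D R T (algebraMap S T s) ≠ 0 := by
  let φ : Ω[T⁄R] →ₗ[T] T :=
    ((Algebra.linearMap S T ∘ₗ d.liftKaehlerDifferential).liftBaseChange T) ∘ₗ
      (tensorKaehlerEquivOfFormallyEtale R S T).symm.toLinearMap
  have hφ : φ (D R T (algebraMap S T s)) = algebraMap S T (d s) := by
    simp [φ, tensorKaehlerEquivOfFormallyEtale_symm_D_algebraMap]
  intro h
  exact hs (by rw [← hφ, h, map_zero])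

theorem AlgebraicIndependent.exists_derivation_adjoin {ι R A : Type*} [CommRing R] [CommRing A]
    [Algebra R A] {v : ι → A} (hv : AlgebraicIndependent R v) (i : ι) :
    ∃ d : Derivation R (Algebra.adjoin R (Set.range v)) (Algebra.adjoin R (Set.range v)),
      d ⟨v i, Algebra.subset_adjoin ⟨i, rfl⟩⟩ = 1 := by
  classical
  let e := hv.aevalEquiv
  have hd : ∀ x, e x = 0 → e (MvPolynomial.mkDerivation R (Pi.single i 1) x) = 0 := by
    intro x hx
    rw [e.map_eq_zero_iff.mp hx, map_zero, map_zero]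
  refine ⟨Derivation.liftOfSurjective e.surjective hd, ?_⟩
  have hX : e (MvPolynomial.X i) = ⟨v i, Algebra.subset_adjoin ⟨i, rfl⟩⟩ :=
    Subtype.ext (hv.aevalEquiv_apply_coe _ |>.trans (MvPolynomial.aeval_X _ _))
  rw [← hX, Derivation.liftOfSurjective_apply, MvPolynomial.mkDerivation_X, Pi.single_eq_same,
    map_one]

open scoped IntermediateField.algebraAdjoinAdjoin in
theorem KaehlerDifferential.D_ne_zero_of_transcendental {k K : Type*} [Field k] [CharZero k]
    [Field K] [Algebra k K] {t : K} (ht : Transcendental k t) : D k K t ≠ 0 := by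
  obtain ⟨B, htB, hB⟩ := exists_isTranscendenceBasis_superset
    ((algebraicIndependent_singleton_iff (x := fun i : ({t} : Set K) => (i : K)) ⟨t, rfl⟩).mpr ht)
  let C := Algebra.adjoin k (Set.range ((↑) : B → K))
  let F := IntermediateField.adjoin k (Set.range ((↑) : B → K))
  have : CharZero K := charZero_of_injective_algebraMap (algebraMap k K).injective
  have : Algebra.IsAlgebraic F K := hB.isAlgebraic_field
  have : Algebra.FormallyEtale C F := .of_isLocalization (nonZeroDivisors C)
  have : Algebra.FormallyEtale F K := .of_isSeparable F K
  have : Algebra.FormallyEtale C K := .comp C F K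
  obtain ⟨d, hd⟩ := hB.1.exists_derivation_adjoin ⟨t, htB rfl⟩
  exact D_algebraMap_ne_zero_of_formallyEtale (T := K) d
    (s := ⟨t, Algebra.subset_adjoin ⟨⟨t, htB rfl⟩, rfl⟩⟩) (by rw [hd, map_one]; exact one_ne_zero)

theorem KaehlerDifferential.D_map_eq_zero {R A B : Type*} [CommRing R] [CommRing A] [CommRing B]
    [Algebra R A] [Algebra R B] (φ : A →ₐ[R] B) {a : A} (ha : D R A a = 0) : D R B (φ a) = 0 := by
  let _ : Algebra A B := φ.toAlgebra
  have : IsScalarTower R A B := .of_algebraMap_eq fun r => (φ.commutes r).symm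
  exact (map_D R R A B a).symm.trans (by rw [ha, map_zero])

theorem KaehlerDifferential.isAlgebraic_of_D_eq_zero {k A K : Type*} [Field k] [CharZero k]
    [CommRing A] [Algebra k A] [Field K] [Algebra k K] (φ : A →ₐ[k] K) {a : A}
    (ha : D k A a = 0) : IsAlgebraic k (φ a) :=
  not_not.mp fun h => D_ne_zero_of_transcendental h (D_map_eq_zero φ ha)

/-- Let `k` be a field of characteristic zero, `X` a set and `A` a
subalgebra of the `k`-algebra of all functions `X → k`. For `a ∈ A`, one has `da = 0` in
`Ω¹_{A|k}` if and only if `a` takes only finitely many values on `X`. -/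
theorem kaehler_D_eq_zero_iff_finite_range
    (k X : Type*) [Field k] [CharZero k] (A : Subalgebra k (X → k)) (a : ↥A) :
    KaehlerDifferential.D k ↥A a = 0 ↔ (Set.range (a : X → k)).Finite := by
  refine ⟨fun ha => ?_, D_eq_zero_of_finite_range A⟩
  by_contra hinf
  have : (comap (a : X → k) cofinite).NeBot := comap_cofinite_neBot_iff.mpr hinf
  obtain ⟨U, hU⟩ := exists_ultrafilter_le (comap (a : X → k) cofinite)
  exact Germ.transcendental_coe_of_le_comap_cofinite hU
    (isAlgebraic_of_D_eq_zero ((Germ.coeAlgHom k (U : Filter X)).comp A.val) ha)
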